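/- Let γ > 1, L > 0, and let τ, τ̄ be positive reals with τ̄ ≤ L. Define ψ(s) = s^{1-γ}. If τ > 3L then the Taylor remainder ψ(τ) - ψ(τ̄) - ψ'(τ̄)(τ - τ̄) ≥ γ(γ-1)·(1/2)·(1/2)^{1+γ}·(τ - τ̄)^{1-γ}. If τ ≤ 3L then ψ(τ) - ψ(τ̄) - ψ'(τ̄)(τ-τ̄) ≥ (γ(γ-1)/2)·(3L)^{-1-γ}·(τ - τ̄)². -/

import Mathlib

/-! On `(0, M]` the second derivative `γ(γ-1)s^{-1-γ}` of `ψ(s) = s^{1-γ}` is at least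
`m = γ(γ-1)M^{-1-γ}`, so `ψ(s) - m s²/2` is convex there and lies above its tangent at `τ̄`.
Take `M = 3L` when `τ ≤ 3L`. When `τ > 3L ≥ 3τ̄` take `M = τ`; then `τ ≤ 2(τ - τ̄)` turns
`τ^{-1-γ}(τ - τ̄)²` into at least `(1/2)^{1+γ}(τ - τ̄)^{1-γ}`. -/

theorem ConvexOn.add_mul_sub_le_of_hasDerivAt {S : Set ℝ} {f : ℝ → ℝ} {f' x y : ℝ}
    (hfc : ConvexOn ℝ S f) (hx : x ∈ S) (hy : y ∈ S) (hf : HasDerivAt f f' x) :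
    f x + f' * (y - x) ≤ f y := by
  rcases lt_trichotomy x y with hxy | rfl | hyx
  · have := hfc.le_slope_of_hasDerivAt hx hy hxy hf
    rw [slope_def_field, le_div_iff₀ (sub_pos.2 hxy)] at this
    linarith
  · simp
  · have := hfc.slope_le_of_hasDerivAt hy hx hyx hf
    rw [slope_def_field, div_le_iff₀ (sub_pos.2 hyx)] at this
    linarith

theorem half_mul_sq_le_taylor_remainder_of_le_deriv2 {D : Set ℝ} {f f' f'' : ℝ → ℝ} {m a b : ℝ}
    (hD : Convex ℝ D) (hf : ∀ x ∈ D, HasDerivAt f (f' x) x)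
    (hf' : ∀ x ∈ D, HasDerivAt f' (f'' x) x) (hm : ∀ x ∈ D, m ≤ f'' x)
    (ha : a ∈ D) (hb : b ∈ D) :
    m / 2 * (b - a) ^ 2 ≤ f b - f a - f' a * (b - a) := by
  set g : ℝ → ℝ := fun y ↦ f y - m / 2 * y ^ 2
  have hg : ∀ x ∈ D, HasDerivAt g (f' x - m * x) x := fun x hx ↦
    ((hf x hx).fun_sub ((hasDerivAt_pow 2 x).const_mul (m / 2))).congr_deriv
      (by push_cast; ring)
  have hg' : ∀ x ∈ D, HasDerivAt (fun y ↦ f' y - m * y) (f'' x - m) x := fun x hx ↦ by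
    simpa using (hf' x hx).fun_sub ((hasDerivAt_id x).const_mul m)
  have hconv : ConvexOn ℝ D g :=
    convexOn_of_hasDerivWithinAt2_nonneg hD
      (fun x hx ↦ (hg x hx).continuousAt.continuousWithinAt)
      (fun x hx ↦ (hg x (interior_subset hx)).hasDerivWithinAt)
      (fun x hx ↦ (hg' x (interior_subset hx)).hasDerivWithinAt)
      (fun x hx ↦ sub_nonneg.2 (hm x (interior_subset hx)))
  have := hconv.add_mul_sub_le_of_hasDerivAt ha hb (hg a ha)
  simp only [g] at this
  linarith

theorem le_rpow_one_sub_taylor_remainder {γ M a b : ℝ} (hγ : 1 ≤ γ) (ha : 0 < a) (hb : 0 < b)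
    (haM : a ≤ M) (hbM : b ≤ M) :
    γ * (γ - 1) / 2 * M ^ (-1 - γ) * (b - a) ^ 2
      ≤ b ^ (1 - γ) - a ^ (1 - γ) - (1 - γ) * a ^ (-γ) * (b - a) := by
  have key := half_mul_sq_le_taylor_remainder_of_le_deriv2 (convex_Ioc 0 M)
    (f := fun x ↦ x ^ (1 - γ)) (f' := fun x ↦ (1 - γ) * x ^ (-γ))
    (f'' := fun x ↦ γ * (γ - 1) * x ^ (-1 - γ)) (m := γ * (γ - 1) * M ^ (-1 - γ))
    (fun x hx ↦ by
      simpa using Real.hasDerivAt_rpow_const (p := 1 - γ) (Or.inl hx.1.ne'))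
    (fun x hx ↦
      ((Real.hasDerivAt_rpow_const (p := -γ) (Or.inl hx.1.ne')).const_mul (1 - γ)).congr_deriv
        (by rw [show -γ - 1 = -1 - γ by ring]; ring))
    (fun x hx ↦ mul_le_mul_of_nonneg_left
      (Real.rpow_le_rpow_of_nonpos hx.1 hx.2 (by linarith)) (by nlinarith))
    ⟨ha, haM⟩ ⟨hb, hbM⟩
  simpa only [mul_div_right_comm] using key

theorem half_rpow_mul_rpow_le_rpow_mul_sq {γ d t : ℝ} (hγ : -1 ≤ γ) (hd : 0 < d) (ht : 0 < t)
    (htd : t ≤ 2 * d) :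
    (1 / 2 : ℝ) ^ (1 + γ) * d ^ (1 - γ) ≤ t ^ (-1 - γ) * d ^ 2 := by
  calc (1 / 2 : ℝ) ^ (1 + γ) * d ^ (1 - γ) = (2 * d) ^ (-1 - γ) * d ^ 2 := by
        rw [Real.mul_rpow (by norm_num) hd.le, one_div, Real.inv_rpow (by norm_num),
          ← Real.rpow_neg (by norm_num), mul_assoc, ← Real.rpow_natCast, ← Real.rpow_add hd]
        ring_nf
    _ ≤ t ^ (-1 - γ) * d ^ 2 := by
      gcongr ?_ * _
      exact Real.rpow_le_rpow_of_nonpos ht htd (by linarith)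

theorem stmt_5_general (γ L τ τb : ℝ) (hγ : 1 < γ)
    (hτ : 0 < τ) (hτb : 0 < τb) (hbL : τb ≤ L) :
    (τ > 3 * L →
      τ ^ (1 - γ) - τb ^ (1 - γ) - ((1 - γ) * τb ^ (-γ)) * (τ - τb)
        ≥ γ * (γ - 1) * (1 / 2) * (1 / 2 : ℝ) ^ (1 + γ) * (τ - τb) ^ (1 - γ)) ∧
    (τ ≤ 3 * L →
      τ ^ (1 - γ) - τb ^ (1 - γ) - ((1 - γ) * τb ^ (-γ)) * (τ - τb)
        ≥ (γ * (γ - 1) / 2) * (3 * L) ^ (-1 - γ) * (τ - τb) ^ 2) := by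
  refine ⟨fun hτL ↦ ?_, fun hτL ↦ ?_⟩
  · calc γ * (γ - 1) * (1 / 2) * (1 / 2 : ℝ) ^ (1 + γ) * (τ - τb) ^ (1 - γ)
        = γ * (γ - 1) / 2 * ((1 / 2 : ℝ) ^ (1 + γ) * (τ - τb) ^ (1 - γ)) := by ring
      _ ≤ γ * (γ - 1) / 2 * (τ ^ (-1 - γ) * (τ - τb) ^ 2) :=
          mul_le_mul_of_nonneg_left
            (half_rpow_mul_rpow_le_rpow_mul_sq (by linarith) (by linarith) hτ (by linarith))
            (by nlinarith)
      _ = γ * (γ - 1) / 2 * τ ^ (-1 - γ) * (τ - τb) ^ 2 := by ring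
      _ ≤ τ ^ (1 - γ) - τb ^ (1 - γ) - ((1 - γ) * τb ^ (-γ)) * (τ - τb) :=
          le_rpow_one_sub_taylor_remainder hγ.le hτb hτ (by linarith) le_rfl
  · exact le_rpow_one_sub_taylor_remainder hγ.le hτb hτ (by linarith) hτL

/-- Lower bounds on the Taylor remainder of `ψ(s) = s^{1-γ}`, `γ > 1`, at `τ̄ ≤ L`,
split according to whether `τ > 3L` or `τ ≤ 3L`. -/
theorem stmt_5 (γ L τ τb : ℝ) (hγ : 1 < γ) (hL : 0 < L)
    (hτ : 0 < τ) (hτb : 0 < τb) (hbL : τb ≤ L) :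
    (τ > 3 * L →
      τ ^ (1 - γ) - τb ^ (1 - γ) - ((1 - γ) * τb ^ (-γ)) * (τ - τb)
        ≥ γ * (γ - 1) * (1 / 2) * (1 / 2 : ℝ) ^ (1 + γ) * (τ - τb) ^ (1 - γ)) ∧
    (τ ≤ 3 * L →
      τ ^ (1 - γ) - τb ^ (1 - γ) - ((1 - γ) * τb ^ (-γ)) * (τ - τb)
        ≥ (γ * (γ - 1) / 2) * (3 * L) ^ (-1 - γ) * (τ - τb) ^ 2) :=
  stmt_5_general γ L τ τb hγ hτ hτb hbL
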